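/- Fix Δ ∈ (0, 1). For h ∈ ℝ and β ≥ 0 define S(h; β) = 0 if |h| < β(1−Δ); S(h; β) = (1/Δ)(|h| − β(1−Δ)) if β(1−Δ) ≤ |h| ≤ β; and S(h; β) = |h| if |h| > β. For z ∈ ℝ^m and β ∈ ℝ^m with nonnegative entries define f(z; β) = sqrt(Σ_{r=1}^m S(z_r; β_r)²). Then f(·; β) is radially convex: for all z ∈ ℝ^m and all α ∈ [0, 1], f(α z; β) ≤ α f(z; β). -/

import Mathlib

open MeasureTheory ProbabilityTheory Real
open scoped ENNReal RealInnerProductSpace BigOperators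

/-- The standard Gaussian measure `N(0, I_n)` on `ℝ^n`. -/
noncomputable def stdGaussian (n : ℕ) : Measure (EuclideanSpace ℝ (Fin n)) :=
  (Measure.pi fun _ : Fin n => gaussianReal 0 1).map
    (MeasurableEquiv.toLp 2 (Fin n → ℝ))

/-- Gaussian width `ω(T) = E[sup_{z ∈ T} ⟨g, z⟩]`, `g ∼ N(0, I_n)`. -/
noncomputable def gaussianWidth {n : ℕ} (T : Set (EuclideanSpace ℝ (Fin n))) : ℝ :=
  ∫ g, sSup ((fun z => ⟪g, z⟫) '' T) ∂(stdGaussian n)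

/-- Joint law of `m` independent `N(0, I_n)` measurement vectors. -/
noncomputable def vecMeas (n m : ℕ) : Measure (Fin m → EuclideanSpace ℝ (Fin n)) :=
  Measure.pi fun _ => stdGaussian n

/-- `C` is a cone: closed under multiplication by nonnegative scalars. -/
def IsCone {n : ℕ} (C : Set (EuclideanSpace ℝ (Fin n))) : Prop :=
  ∀ t : ℝ, 0 ≤ t → ∀ h ∈ C, t • h ∈ C

/-- `dist(z, x) = min(‖z − x‖₂, ‖z + x‖₂)`. -/
noncomputable def pdist {n : ℕ} (z x : EuclideanSpace ℝ (Fin n)) : ℝ :=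
  min ‖z - x‖ ‖z + x‖

/-- `p` is a nearest point of the set `K` to `v` (a metric projection of `v` onto `K`). -/
def NearestPt {n : ℕ} (K : Set (EuclideanSpace ℝ (Fin n)))
    (v p : EuclideanSpace ℝ (Fin n)) : Prop :=
  p ∈ K ∧ ∀ w ∈ K, ‖v - p‖ ≤ ‖v - w‖

/-- `sgn(t) = 1` if `t ≥ 0` and `−1` otherwise. -/
noncomputable def sgn (t : ℝ) : ℝ := if 0 ≤ t then 1 else -1

/-- The soft truncation map `S(h; β)` with parameter `Δ`. -/
noncomputable def Sfun (Δ h β : ℝ) : ℝ :=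
  if |h| < β * (1 - Δ) then 0
  else if |h| ≤ β then (1 / Δ) * (|h| - β * (1 - Δ))
  else |h|

/-- For `β ≥ 0` every affine piece `t ↦ a t - b` here has `b ≥ 0`, hence satisfies
`a (α t) - b ≤ α (a t - b)` for `α ∈ [0, 1]`; this inequality passes through `min` and `max`. -/
lemma Sfun_eq_min_max {Δ : ℝ} (hΔ : Δ ∈ Set.Ioo (0 : ℝ) 1) (h β : ℝ) :
    Sfun Δ h β = min |h| (max 0 ((|h| - β * (1 - Δ)) / Δ)) := by
  obtain ⟨hΔ0, hΔ1⟩ := hΔ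
  unfold Sfun
  split_ifs with hlow hmid
  · have : (|h| - β * (1 - Δ)) / Δ ≤ 0 := div_nonpos_of_nonpos_of_nonneg (by linarith) hΔ0.le
    rw [max_eq_left this, min_eq_right (abs_nonneg h)]
  · have hnum : 0 ≤ |h| - β * (1 - Δ) := by linarith
    have hle : (|h| - β * (1 - Δ)) / Δ ≤ |h| := by
      rw [div_le_iff₀ hΔ0]; nlinarith
    rw [max_eq_right (div_nonneg hnum hΔ0.le), min_eq_right hle, one_div_mul_eq_div]
  · have hge : |h| ≤ (|h| - β * (1 - Δ)) / Δ := by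
      rw [le_div_iff₀ hΔ0]; nlinarith
    rw [min_eq_left (hge.trans (le_max_right _ _))]

lemma Sfun_nonneg {Δ : ℝ} (hΔ : Δ ∈ Set.Ioo (0 : ℝ) 1) (h β : ℝ) : 0 ≤ Sfun Δ h β := by
  rw [Sfun_eq_min_max hΔ]
  exact le_min (abs_nonneg h) (le_max_left _ _)

lemma Sfun_mul_le {Δ β α : ℝ} (hΔ : Δ ∈ Set.Ioo (0 : ℝ) 1) (hβ : 0 ≤ β)
    (hα : α ∈ Set.Icc (0 : ℝ) 1) (h : ℝ) : Sfun Δ (α * h) β ≤ α * Sfun Δ h β := by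
  obtain ⟨hα0, hα1⟩ := hα
  have hintercept : α * |h| - β * (1 - Δ) ≤ α * (|h| - β * (1 - Δ)) := by
    nlinarith [mul_nonneg hβ (sub_nonneg.mpr hΔ.2.le)]
  rw [Sfun_eq_min_max hΔ, Sfun_eq_min_max hΔ, abs_mul, abs_of_nonneg hα0,
    mul_min_of_nonneg _ _ hα0, mul_max_of_nonneg _ _ hα0, mul_zero, ← mul_div_assoc]
  gcongr
  exact hΔ.1.le

lemma sqrt_sum_sq_le_mul_sqrt_sum_sq {ι : Type*} [Fintype ι] {u v : ι → ℝ} {α : ℝ}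
    (hα : 0 ≤ α) (hu : ∀ i, 0 ≤ u i) (huv : ∀ i, u i ≤ α * v i) :
    √(∑ i, u i ^ 2) ≤ α * √(∑ i, v i ^ 2) := by
  rw [← Real.sqrt_sq hα, ← Real.sqrt_mul (sq_nonneg α), Finset.mul_sum]
  gcongr with i
  calc u i ^ 2 ≤ (α * v i) ^ 2 := pow_le_pow_left₀ (hu i) (huv i) 2
    _ = α ^ 2 * v i ^ 2 := mul_pow α (v i) 2

/-- Lemma: `f(·; β)` is radially convex. -/
theorem statement16 (Δ : ℝ) (hΔ : Δ ∈ Set.Ioo (0 : ℝ) 1) (m : ℕ)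
    (β : Fin m → ℝ) (hβ : ∀ r, 0 ≤ β r) (z : Fin m → ℝ)
    (α : ℝ) (hα : α ∈ Set.Icc (0 : ℝ) 1) :
    Real.sqrt (∑ r, Sfun Δ (α * z r) (β r) ^ 2)
      ≤ α * Real.sqrt (∑ r, Sfun Δ (z r) (β r) ^ 2) :=
  sqrt_sum_sq_le_mul_sqrt_sum_sq hα.1 (fun _ => Sfun_nonneg hΔ _ _)
    (fun r => Sfun_mul_le hΔ (hβ r) hα (z r))
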